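/- Consider an online hierarchical forecasting problem with summing matrices S_t ∈ ℝ^{n_t×d}, features x_t ∈ ℝ^m and responses y_t ∈ ℝ^{n_t} for t ∈ [T]. Let λ > 0 and run MultiVAW-OHF with Λ_t = λ I_{dm}: set X_t = x_tᵀ ⊗ S_t, A_t = λ I_{dm} + Σ_{s=1}^t X_sᵀX_s, b_{t-1} = Σ_{s=1}^{t-1} X_sᵀy_s, θ_t = A_t^{-1}b_{t-1} and predictions ŷ_t = X_tθ_t. Set ȳ = max_t ‖y_t‖₂, x̄ = max_t ‖x_t‖₂ and S̄ = max_t ‖S_t‖_F. Then for every Θ ∈ ℝ^{d×m}: Σ_{t=1}^T ‖ŷ_t − y_t‖₂² − Σ_{t=1}^T ‖S_tΘx_t − y_t‖₂² ≤ λ‖Θ‖_F² + dm ȳ² log( 1 + T x̄² S̄² / (dm λ) ). -/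

import Mathlib

/-!
The Vovk–Azoury–Warmuth argument. Let `F_t(θ) = λ‖θ‖² + ∑_{s ≤ t} ‖X_s θ - y_s‖²` and
`Ψ_t = min F_t = ∑_{s ≤ t} ‖y_s‖² - b_tᵀA_t⁻¹b_t`. The forecaster `θ_t = A_t⁻¹ b_{t-1}` satisfies
`F_t(θ_t) = Ψ_t + (X_tᵀy_t)ᵀ A_t⁻¹ (X_tᵀy_t)` while `F_{t-1}(θ_t) ≥ Ψ_{t-1}`, and
`F_t - F_{t-1}` is the loss at time `t`; so the loss of `θ_t` exceeds `Ψ_t - Ψ_{t-1}` by at most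
that leverage term. The leverage term is at most `‖y_t‖² tr(A_t⁻¹ X_tᵀX_t)`, hence, by concavity
of `log det`, at most `ȳ² (log det A_t - log det A_{t-1})`. Summing and using `Ψ_T ≤ F_T(vec Θ)`,
the regret is at most `λ‖Θ‖²_F + ȳ² log (det A_T / det (λI))`, and AM–GM on the eigenvalues of
`A_T`, whose trace is at most `dmλ + T x̄² S̄²`, bounds the last logarithm.
-/

open Matrix Finset

noncomputable section

namespace Matrix

variable {ι : Type*} [Fintype ι]

lemma IsHermitian.dotProduct_mulVec_comm {M : Matrix ι ι ℝ} (hM : M.IsHermitian)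
    (u v : ι → ℝ) : u ⬝ᵥ M *ᵥ v = v ⬝ᵥ M *ᵥ u := by
  have hMt : Mᵀ = M := by rw [← conjTranspose_eq_transpose_of_trivial, hM.eq]
  rw [dotProduct_mulVec, ← mulVec_transpose, hMt, dotProduct_comm]

open scoped MatrixOrder in
lemma PosSemidef.dotProduct_mulVec_le_mul_trace {P : Matrix ι ι ℝ} (hP : P.PosSemidef)
    (y : ι → ℝ) : y ⬝ᵥ P *ᵥ y ≤ (y ⬝ᵥ y) * P.trace := by
  classical
  obtain ⟨B, rfl⟩ := CStarAlgebra.nonneg_iff_eq_star_mul_self.mp hP.nonneg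
  have hquad : y ⬝ᵥ (star B * B) *ᵥ y = ∑ i, (∑ j, B i j * y j) ^ 2 := by
    rw [← mulVec_mulVec, dotProduct_mulVec, star_eq_conjTranspose, vecMul_conjTranspose,
      star_trivial]
    simp [dotProduct, mulVec, sq]
  have htrace : (star B * B).trace = ∑ i, ∑ j, B i j ^ 2 := by
    rw [star_eq_conjTranspose, trace_mul_comm]
    simp [trace, mul_apply, sq]
  rw [hquad, htrace, Finset.mul_sum]
  refine Finset.sum_le_sum fun i _ => ?_
  calc (∑ j, B i j * y j) ^ 2 ≤ (∑ j, B i j ^ 2) * ∑ j, y j ^ 2 :=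
        Finset.sum_mul_sq_le_sq_mul_sq _ _ _
    _ = (y ⬝ᵥ y) * ∑ j, B i j ^ 2 := by rw [mul_comm]; simp [dotProduct, sq]

variable [DecidableEq ι]

/-- The variational formula `vᵀM⁻¹v = max_w (2 v⬝w - wᵀMw)`, in its inequality half. -/
lemma PosDef.two_mul_dotProduct_sub_le {M : Matrix ι ι ℝ} (hM : M.PosDef) (v w : ι → ℝ) :
    2 * (v ⬝ᵥ w) - w ⬝ᵥ M *ᵥ w ≤ v ⬝ᵥ M⁻¹ *ᵥ v := by
  have hMinv : M *ᵥ (M⁻¹ *ᵥ v) = v := by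
    rw [mulVec_mulVec, mul_nonsing_inv _ hM.det_pos.ne'.isUnit, one_mulVec]
  have hz := hM.posSemidef.dotProduct_mulVec_nonneg (w - M⁻¹ *ᵥ v)
  rw [star_trivial, mulVec_sub, hMinv, dotProduct_sub, sub_dotProduct, sub_dotProduct,
    hM.isHermitian.dotProduct_mulVec_comm (M⁻¹ *ᵥ v) w, hMinv, dotProduct_comm (M⁻¹ *ᵥ v),
    dotProduct_comm w v] at hz
  linarith

lemma PosDef.log_det_le_trace_sub_card {C : Matrix ι ι ℝ} (hC : C.PosDef) :
    Real.log C.det ≤ C.trace - Fintype.card ι := by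
  have hdet : C.det = ∏ i, hC.1.eigenvalues i := by
    simpa using hC.1.det_eq_prod_eigenvalues
  have htrace : C.trace = ∑ i, hC.1.eigenvalues i := by
    simpa using hC.1.trace_eq_sum_eigenvalues
  rw [hdet, htrace, Real.log_prod fun i _ => (hC.eigenvalues_pos i).ne',
    Fintype.card_eq_sum_ones, Nat.cast_sum, Nat.cast_one, ← Finset.sum_sub_distrib]
  exact Finset.sum_le_sum fun i _ => Real.log_le_sub_one_of_pos (hC.eigenvalues_pos i)

open scoped MatrixOrder in
/-- First-order concavity of `log det`. -/
lemma PosDef.trace_inv_mul_sub_le_log_det_sub {M B : Matrix ι ι ℝ} (hM : M.PosDef)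
    (hB : B.PosDef) : (M⁻¹ * (M - B)).trace ≤ Real.log M.det - Real.log B.det := by
  obtain ⟨R, hR⟩ := CStarAlgebra.nonneg_iff_eq_star_mul_self.mp hM.inv.posSemidef.nonneg
  rw [star_eq_conjTranspose] at hR
  have hRdet : R.det * R.det = (M.det)⁻¹ := by
    rw [← Ring.inverse_eq_inv', ← det_nonsing_inv, hR, det_mul, det_conjTranspose, star_trivial]
  have hRunit : IsUnit R :=
    (isUnit_iff_isUnit_det R).mpr <| isUnit_of_mul_isUnit_left (y := R.det) <|
      hRdet ▸ (inv_ne_zero hM.det_pos.ne').isUnit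
  have hC : (R * B * Rᴴ).PosDef :=
    hB.mul_mul_conjTranspose_same (vecMul_injective_iff_isUnit.mpr hRunit)
  have htrace : (R * B * Rᴴ).trace = (M⁻¹ * B).trace := by
    rw [trace_mul_cycle, hR]
  have hdet : (R * B * Rᴴ).det = B.det / M.det := by
    rw [det_mul, det_mul, det_conjTranspose, star_trivial, div_eq_mul_inv, ← hRdet]
    ring
  have key := hC.log_det_le_trace_sub_card
  rw [htrace, hdet, Real.log_div hB.det_pos.ne' hM.det_pos.ne'] at key
  rw [Matrix.mul_sub, trace_sub, nonsing_inv_mul _ hM.det_pos.ne'.isUnit, trace_one]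
  linarith

lemma PosDef.log_det_le_card_mul_log_trace_div_card {M : Matrix ι ι ℝ} (hM : M.PosDef) :
    Real.log M.det ≤ Fintype.card ι * Real.log (M.trace / Fintype.card ι) := by
  rcases isEmpty_or_nonempty ι with hι | hι
  · simp
  have htrace : 0 < M.trace := hM.trace_pos
  set c := (Fintype.card ι : ℝ) / M.trace
  have hc : 0 < c := by positivity
  have key := (hM.smul hc).log_det_le_trace_sub_card
  rw [det_smul, trace_smul, smul_eq_mul, Real.log_mul (by positivity) hM.det_pos.ne',
    Real.log_pow, div_mul_cancel₀ _ htrace.ne', sub_self] at key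
  rw [← inv_div, Real.log_inv]
  linarith

end Matrix

def sqLoss {κ N : Type*} [Fintype κ] [Fintype N] (M : Matrix κ N ℝ) (v : κ → ℝ) (θ : N → ℝ) :
    ℝ :=
  ∑ i, ((M *ᵥ θ) i - v i) ^ 2

lemma sqLoss_eq {κ N : Type*} [Fintype κ] [Fintype N] (M : Matrix κ N ℝ) (v : κ → ℝ)
    (θ : N → ℝ) : sqLoss M v θ = θ ⬝ᵥ (Mᵀ * M) *ᵥ θ - 2 * ((Mᵀ *ᵥ v) ⬝ᵥ θ) + v ⬝ᵥ v := by
  have hsq : sqLoss M v θ = (M *ᵥ θ - v) ⬝ᵥ (M *ᵥ θ - v) := by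
    simp [sqLoss, dotProduct, sq]
  rw [hsq, ← mulVec_mulVec, dotProduct_mulVec θ Mᵀ, vecMul_transpose, mulVec_transpose,
    ← dotProduct_mulVec, sub_dotProduct, dotProduct_sub, dotProduct_sub, dotProduct_comm v]
  ring

section Ridge

variable {N : Type*} {ρ : ℕ → Type*} [∀ t, Fintype (ρ t)]
  (lam : ℝ) (X : (t : ℕ) → Matrix (ρ t) N ℝ) (y : (t : ℕ) → ρ t → ℝ)

def momentVec (t : ℕ) : N → ℝ := ∑ s ∈ Icc 1 t, (X s)ᵀ *ᵥ y s

lemma momentVec_succ (k : ℕ) :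
    momentVec X y (k + 1) = momentVec X y k + (X (k + 1))ᵀ *ᵥ y (k + 1) := by
  rw [momentVec, momentVec, sum_Icc_succ_top (Nat.le_add_left 1 k)]

section

variable [DecidableEq N]

def regGram (t : ℕ) : Matrix N N ℝ := lam • 1 + ∑ s ∈ Icc 1 t, (X s)ᵀ * X s

lemma regGram_succ (k : ℕ) :
    regGram lam X (k + 1) = regGram lam X k + (X (k + 1))ᵀ * X (k + 1) := by
  rw [regGram, regGram, sum_Icc_succ_top (Nat.le_add_left 1 k), add_assoc]

end

variable [Fintype N]

def ridgeObjective (t : ℕ) (θ : N → ℝ) : ℝ :=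
  lam * (θ ⬝ᵥ θ) + ∑ s ∈ Icc 1 t, sqLoss (X s) (y s) θ

lemma ridgeObjective_succ (k : ℕ) (θ : N → ℝ) :
    ridgeObjective lam X y (k + 1) θ
      = ridgeObjective lam X y k θ + sqLoss (X (k + 1)) (y (k + 1)) θ := by
  rw [ridgeObjective, ridgeObjective, sum_Icc_succ_top (Nat.le_add_left 1 k), add_assoc]

variable [DecidableEq N]

/-- The minimum value of `ridgeObjective lam X y t`. -/
def ridgeValue (t : ℕ) : ℝ :=
  ∑ s ∈ Icc 1 t, y s ⬝ᵥ y s - momentVec X y t ⬝ᵥ (regGram lam X t)⁻¹ *ᵥ momentVec X y t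

def vawIterate (t : ℕ) : N → ℝ := (regGram lam X t)⁻¹ *ᵥ momentVec X y (t - 1)

def leverage (t : ℕ) : ℝ := ((X t)ᵀ *ᵥ y t) ⬝ᵥ (regGram lam X t)⁻¹ *ᵥ ((X t)ᵀ *ᵥ y t)

lemma ridgeValue_zero : ridgeValue lam X y 0 = 0 := by
  simp [ridgeValue, momentVec]

lemma ridgeObjective_eq (t : ℕ) (θ : N → ℝ) :
    ridgeObjective lam X y t θ = θ ⬝ᵥ regGram lam X t *ᵥ θ - 2 * (momentVec X y t ⬝ᵥ θ)
      + ∑ s ∈ Icc 1 t, y s ⬝ᵥ y s := by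
  simp only [ridgeObjective, sqLoss_eq, regGram, momentVec, add_mulVec, smul_mulVec, one_mulVec,
    dotProduct_add, dotProduct_smul, smul_eq_mul, sum_mulVec, dotProduct_sum, sum_dotProduct,
    Finset.sum_add_distrib, Finset.sum_sub_distrib, ← Finset.mul_sum]
  ring

variable {lam}

lemma regGram_posDef (hlam : 0 < lam) (t : ℕ) : (regGram lam X t).PosDef := by
  refine (PosDef.one.smul hlam).add_posSemidef (posSemidef_sum _ fun s _ => ?_)
  simpa using posSemidef_conjTranspose_mul_self (X s)

lemma ridgeValue_le_ridgeObjective (hlam : 0 < lam) (t : ℕ) (θ : N → ℝ) :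
    ridgeValue lam X y t ≤ ridgeObjective lam X y t θ := by
  have := (regGram_posDef X hlam t).two_mul_dotProduct_sub_le (momentVec X y t) θ
  rw [ridgeValue, ridgeObjective_eq]
  linarith

lemma ridgeObjective_succ_vawIterate (hlam : 0 < lam) (k : ℕ) :
    ridgeObjective lam X y (k + 1) (vawIterate lam X y (k + 1))
      = ridgeValue lam X y (k + 1) + leverage lam X y (k + 1) := by
  set A := regGram lam X (k + 1)
  set β := momentVec X y k
  set v := (X (k + 1))ᵀ *ᵥ y (k + 1)
  have hA := regGram_posDef X hlam (k + 1)
  have hAθ : A *ᵥ (A⁻¹ *ᵥ β) = β := by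
    rw [mulVec_mulVec, mul_nonsing_inv _ hA.det_pos.ne'.isUnit, one_mulVec]
  rw [vawIterate, Nat.add_sub_cancel, leverage, ridgeObjective_eq, ridgeValue, momentVec_succ,
    hAθ, mulVec_add, dotProduct_add, add_dotProduct, add_dotProduct,
    hA.inv.isHermitian.dotProduct_mulVec_comm β v, dotProduct_comm β (A⁻¹ *ᵥ β)]
  ring

lemma sqLoss_vawIterate_le (hlam : 0 < lam) (k : ℕ) :
    sqLoss (X (k + 1)) (y (k + 1)) (vawIterate lam X y (k + 1))
      ≤ ridgeValue lam X y (k + 1) - ridgeValue lam X y k + leverage lam X y (k + 1) := by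
  have hprev := ridgeValue_le_ridgeObjective X y hlam k (vawIterate lam X y (k + 1))
  have hcur := ridgeObjective_succ_vawIterate X y hlam k
  rw [ridgeObjective_succ] at hcur
  linarith

lemma leverage_le (hlam : 0 < lam) {Y : ℝ} (k : ℕ) (hy : y (k + 1) ⬝ᵥ y (k + 1) ≤ Y ^ 2) :
    leverage lam X y (k + 1)
      ≤ Y ^ 2 * (Real.log (regGram lam X (k + 1)).det - Real.log (regGram lam X k).det) := by
  set A := regGram lam X (k + 1) with hAdef
  have hA := regGram_posDef X hlam (k + 1)
  set P := X (k + 1) * A⁻¹ * (X (k + 1))ᵀ with hPdef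
  have hP : P.PosSemidef := by
    simpa using hA.inv.posSemidef.mul_mul_conjTranspose_same (X (k + 1))
  have hquad : ((X (k + 1))ᵀ *ᵥ y (k + 1)) ⬝ᵥ A⁻¹ *ᵥ ((X (k + 1))ᵀ *ᵥ y (k + 1))
      = y (k + 1) ⬝ᵥ P *ᵥ y (k + 1) := by
    rw [← mulVec_mulVec, ← mulVec_mulVec, dotProduct_mulVec (y (k + 1)), ← mulVec_transpose]
  have htrace : P.trace = (A⁻¹ * (A - regGram lam X k)).trace := by
    rw [show A - regGram lam X k = (X (k + 1))ᵀ * X (k + 1) from by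
      rw [hAdef, regGram_succ, add_sub_cancel_left], hPdef, Matrix.mul_assoc, trace_mul_comm,
      Matrix.mul_assoc]
  have hdet := hA.trace_inv_mul_sub_le_log_det_sub (regGram_posDef X hlam k)
  rw [leverage, hquad]
  calc y (k + 1) ⬝ᵥ P *ᵥ y (k + 1) ≤ (y (k + 1) ⬝ᵥ y (k + 1)) * P.trace :=
        hP.dotProduct_mulVec_le_mul_trace _
    _ ≤ Y ^ 2 * P.trace := mul_le_mul_of_nonneg_right hy hP.trace_nonneg
    _ ≤ _ := mul_le_mul_of_nonneg_left (htrace ▸ hdet) (sq_nonneg Y)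

lemma sum_sqLoss_vawIterate_le (hlam : 0 < lam) {Y : ℝ} :
    ∀ T : ℕ, (∀ t ∈ Icc 1 T, y t ⬝ᵥ y t ≤ Y ^ 2) →
    ∑ t ∈ Icc 1 T, sqLoss (X t) (y t) (vawIterate lam X y t)
      ≤ ridgeValue lam X y T
        + Y ^ 2 * (Real.log (regGram lam X T).det - Real.log (regGram lam X 0).det)
  | 0, _ => by simp [ridgeValue_zero]
  | k + 1, hy => by
    rw [sum_Icc_succ_top (by omega)]
    have ih := sum_sqLoss_vawIterate_le hlam k fun t ht => hy t (Icc_subset_Icc_right (by omega) ht)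
    have hstep := sqLoss_vawIterate_le X y hlam k
    have hlev := leverage_le X y hlam k (hy (k + 1) (by simp))
    linarith

lemma log_det_regGram_sub_le (hlam : 0 < lam) (T : ℕ) {G : ℝ}
    (hG : ∀ t ∈ Icc 1 T, ((X t)ᵀ * X t).trace ≤ G) :
    Real.log (regGram lam X T).det - Real.log (regGram lam X 0).det
      ≤ Fintype.card N * Real.log (1 + T * G / (Fintype.card N * lam)) := by
  rcases isEmpty_or_nonempty N with hN | hN
  · simp
  set c : ℝ := (Fintype.card N : ℝ)
  have hc : 0 < c := Nat.cast_pos.mpr Fintype.card_pos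
  have hA := regGram_posDef X hlam T
  have hdet0 : Real.log (regGram lam X 0).det = c * Real.log lam := by
    simp [regGram, Real.log_pow, c]
  have htrace : (regGram lam X T).trace ≤ c * lam + T * G := by
    have := Finset.sum_le_card_nsmul (Icc 1 T) _ G hG
    rw [Nat.card_Icc, Nat.add_sub_cancel, nsmul_eq_mul] at this
    rw [regGram, trace_add, trace_smul, trace_one, trace_sum, smul_eq_mul]
    linarith
  have hmean : (regGram lam X T).trace / c ≤ lam * (1 + T * G / (c * lam)) := by
    rw [div_le_iff₀ hc]
    field_simp
    linarith
  have htrpos : 0 < (regGram lam X T).trace / c := div_pos hA.trace_pos hc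
  have hgrowth : 0 < 1 + T * G / (c * lam) :=
    pos_of_mul_pos_right (htrpos.trans_le hmean) hlam.le
  have hlog := Real.log_le_log htrpos hmean
  rw [Real.log_mul hlam.ne' hgrowth.ne'] at hlog
  have hamgm := hA.log_det_le_card_mul_log_trace_div_card
  have := mul_le_mul_of_nonneg_left hlog hc.le
  rw [hdet0]
  linarith

theorem vaw_regret_le (hlam : 0 < lam) (T : ℕ) {Y G : ℝ}
    (hy : ∀ t ∈ Icc 1 T, y t ⬝ᵥ y t ≤ Y ^ 2) (hG : ∀ t ∈ Icc 1 T, ((X t)ᵀ * X t).trace ≤ G)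
    (θ : N → ℝ) :
    ∑ t ∈ Icc 1 T, sqLoss (X t) (y t) (vawIterate lam X y t)
        - ∑ t ∈ Icc 1 T, sqLoss (X t) (y t) θ
      ≤ lam * (θ ⬝ᵥ θ)
        + Fintype.card N * Y ^ 2 * Real.log (1 + T * G / (Fintype.card N * lam)) := by
  have hvaw := sum_sqLoss_vawIterate_le X y hlam T hy
  have hmin := ridgeValue_le_ridgeObjective X y hlam T θ
  have hdet := mul_le_mul_of_nonneg_left (log_det_regGram_sub_le X hlam T hG) (sq_nonneg Y)
  rw [ridgeObjective] at hmin
  linarith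

end Ridge

section DesignMatrix

variable {κ ι μ : Type*}

/-- The Kronecker product `xᵀ ⊗ S`, with its `Unit × κ` rows indexed by `κ`. -/
def designMatrix (S : Matrix κ μ ℝ) (x : ι → ℝ) : Matrix κ (ι × μ) ℝ :=
  of fun i p => x p.1 * S i p.2

lemma designMatrix_mulVec_vec [Fintype ι] [Fintype μ] (S : Matrix κ μ ℝ) (Θ : Matrix μ ι ℝ)
    (x : ι → ℝ) :
    designMatrix S x *ᵥ vec Θ = (S * Θ) *ᵥ x := by
  ext i
  have := congrFun (kronecker_mulVec_vec S Θ (replicateRow Unit x)) ((), i)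
  rwa [vec, transpose_replicateRow, ← replicateCol_mulVec] at this

lemma trace_transpose_designMatrix_mul_self [Fintype κ] [Fintype ι] [Fintype μ]
    (S : Matrix κ μ ℝ) (x : ι → ℝ) :
    ((designMatrix S x)ᵀ * designMatrix S x).trace = (∑ j, x j ^ 2) * ∑ i, ∑ l, S i l ^ 2 := by
  simp only [designMatrix, trace, Matrix.diag, mul_apply, transpose_apply, of_apply,
    Fintype.sum_prod_type, Finset.sum_mul]
  refine Finset.sum_congr rfl fun j _ => ?_
  rw [Finset.sum_comm, Finset.mul_sum]
  refine Finset.sum_congr rfl fun i _ => ?_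
  rw [Finset.mul_sum]
  exact Finset.sum_congr rfl fun l _ => by ring

end DesignMatrix

lemma le_sq_sup'_sqrt {α : Type*} {s : Finset α} (hs : s.Nonempty) {f : α → ℝ} {a : α}
    (ha : a ∈ s) (hf : 0 ≤ f a) : f a ≤ (s.sup' hs fun t => √(f t)) ^ 2 := by
  calc f a = √(f a) ^ 2 := (Real.sq_sqrt hf).symm
    _ ≤ _ := pow_le_pow_left₀ (Real.sqrt_nonneg _) (le_sup' (fun t => √(f t)) ha) 2

/-- **Regret bound for MultiVAW-OHF with standard regularization `Λ_t = λ I_{dm}`**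
(Corollary 3, item 1).  With `X_t = x_tᵀ ⊗ S_t` (realized as the `n_t × (m·d)`
matrix with entry `(i, (j,l)) ↦ x_t j * (S_t) i l`),
`A_t = λ I_{dm} + ∑_{s≤t} XₛᵀXₛ`, `b_{t-1} = ∑_{s<t} Xₛᵀyₛ`,
iterates `θ_t = A_t⁻¹ b_{t-1}`, predictions `ŷ_t = X_t θ_t`, and
`ȳ = max ‖y_t‖₂`, `x̄ = max ‖x_t‖₂`, `S̄ = max ‖S_t‖_F`, the regret against any
`Θ ∈ ℝ^{d×m}` is at most `λ‖Θ‖_F² + dm ȳ² log(1 + T x̄² S̄² / (dm λ))`. -/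
theorem multivaw_ohf_regret_bound
    (T d m : ℕ) (hT : 1 ≤ T)
    (n : ℕ → ℕ)
    (S : (t : ℕ) → Matrix (Fin (n t)) (Fin d) ℝ)
    (x : ℕ → Fin m → ℝ)
    (y : (t : ℕ) → Fin (n t) → ℝ)
    (lam : ℝ) (hlam : 0 < lam)
    (X : (t : ℕ) → Matrix (Fin (n t)) (Fin m × Fin d) ℝ)
    (hX : ∀ t ∈ Icc 1 T, X t = Matrix.of fun i p => x t p.1 * S t i p.2)
    (A : ℕ → Matrix (Fin m × Fin d) (Fin m × Fin d) ℝ)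
    (hA : ∀ t ∈ Icc 1 T,
      A t = lam • (1 : Matrix (Fin m × Fin d) (Fin m × Fin d) ℝ)
        + ∑ s ∈ Icc 1 t, (X s)ᵀ * X s)
    (b : ℕ → (Fin m × Fin d → ℝ))
    (hb : ∀ t ≤ T, b t = ∑ s ∈ Icc 1 t, (X s)ᵀ.mulVec (y s))
    (θ : ℕ → (Fin m × Fin d → ℝ))
    (hθ : ∀ t ∈ Icc 1 T, θ t = (A t)⁻¹.mulVec (b (t - 1)))
    (yhat : (t : ℕ) → Fin (n t) → ℝ)
    (hyhat : ∀ t ∈ Icc 1 T, yhat t = (X t).mulVec (θ t))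
    (ybar xbar Sbar : ℝ)
    (hybar : ybar = (Icc 1 T).sup' (Finset.nonempty_Icc.mpr hT)
      (fun t => Real.sqrt (∑ i, (y t i) ^ 2)))
    (hxbar : xbar = (Icc 1 T).sup' (Finset.nonempty_Icc.mpr hT)
      (fun t => Real.sqrt (∑ j, (x t j) ^ 2)))
    (hSbar : Sbar = (Icc 1 T).sup' (Finset.nonempty_Icc.mpr hT)
      (fun t => Real.sqrt (∑ i, ∑ l, (S t i l) ^ 2)))
    (Θ : Matrix (Fin d) (Fin m) ℝ) :
    (∑ t ∈ Icc 1 T, ∑ i, (yhat t i - y t i) ^ 2)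
      - ∑ t ∈ Icc 1 T, ∑ i, ((S t * Θ).mulVec (x t) i - y t i) ^ 2
    ≤ lam * (∑ i, ∑ j, (Θ i j) ^ 2)
        + (d : ℝ) * m * ybar ^ 2
          * Real.log (1 + (T : ℝ) * xbar ^ 2 * Sbar ^ 2 / ((d : ℝ) * m * lam)) := by
  have hy : ∀ t ∈ Icc 1 T, y t ⬝ᵥ y t ≤ ybar ^ 2 := fun t ht => by
    rw [hybar, show y t ⬝ᵥ y t = ∑ i, y t i ^ 2 by simp only [dotProduct, sq]]
    exact le_sq_sup'_sqrt _ ht (f := fun t => ∑ i, y t i ^ 2) (by positivity)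
  have hG : ∀ t ∈ Icc 1 T, ((X t)ᵀ * X t).trace ≤ xbar ^ 2 * Sbar ^ 2 := fun t ht => by
    rw [hX t ht, ← designMatrix, trace_transpose_designMatrix_mul_self, hxbar, hSbar]
    exact mul_le_mul (le_sq_sup'_sqrt _ ht (f := fun t => ∑ j, x t j ^ 2) (by positivity))
      (le_sq_sup'_sqrt _ ht (f := fun t => ∑ i, ∑ l, S t i l ^ 2) (by positivity))
      (by positivity) (sq_nonneg _)
  have hpred : ∀ t ∈ Icc 1 T,
      ∑ i, (yhat t i - y t i) ^ 2 = sqLoss (X t) (y t) (vawIterate lam X y t) := fun t ht => by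
    rw [hyhat t ht, hθ t ht, hA t ht, hb (t - 1) (by grind)]
    rfl
  have hcomp : ∀ t ∈ Icc 1 T,
      ∑ i, (((S t * Θ) *ᵥ x t) i - y t i) ^ 2 = sqLoss (X t) (y t) (vec Θ) := fun t ht => by
    rw [hX t ht, ← designMatrix, sqLoss, designMatrix_mulVec_vec]
  have hnorm : vec Θ ⬝ᵥ vec Θ = ∑ i, ∑ j, Θ i j ^ 2 := by
    simp only [vec, dotProduct, Fintype.sum_prod_type, sq]
    exact Finset.sum_comm
  have hcard : (Fintype.card (Fin m × Fin d) : ℝ) = d * m := by simp [mul_comm]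
  have hregret := vaw_regret_le X y hlam T hy hG (vec Θ)
  rw [hnorm, hcard, ← mul_assoc (T : ℝ)] at hregret
  rwa [sum_congr rfl hpred, sum_congr rfl hcomp]
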